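/- arXiv:2506.05855 — 4 statements merged into one kernel-verified Lean document; each statement's English description precedes it below -/
import Mathlib

section
/- Let K be a nonempty closed convex subset of a real Hilbert space H, let η > 0, G ∈ H, g ∈ H, x₁, x_t ∈ H. Define v_t as a minimizer over K of v ↦ ⟨η(G+g) + (x_t - x₁), v⟩, and y_{t+1} as the minimizer over K of y ↦ η⟨G+g, y⟩ + (1/2)‖y - x₁‖². Then ⟨x_t - y_{t+1}, v_t - y_{t+1}⟩ ≤ 0. -/
/-!
Both `v_t` and `y_{t+1}` satisfy a first-order optimality condition on `K`, with gradients
`η(G+g) + (x_t - x₁)` and `η(G+g) + (y_{t+1} - x₁)` respectively. Testing the first at `y_{t+1}`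
and the second at `v_t` and subtracting, the common term `η(G+g) - x₁` cancels.
-/

open RealInnerProductSpace

theorem IsMinOn.hasFDerivWithinAt_sub_nonneg {E : Type*} [NormedAddCommGroup E] [NormedSpace ℝ E]
    {f : E → ℝ} {f' : StrongDual ℝ E} {s : Set E} {a y : E} (h : IsMinOn f s a)
    (hs : Convex ℝ s) (ha : a ∈ s) (hf : HasFDerivWithinAt f f' s a) (hy : y ∈ s) :
    0 ≤ f' (y - a) :=
  h.localize.hasFDerivWithinAt_nonneg hf <|
    sub_mem_posTangentConeAt_of_segment_subset (hs.segment_subset ha hy)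

section Proximal

variable {H : Type*} [NormedAddCommGroup H] [InnerProductSpace ℝ H]

theorem hasFDerivAt_inner_add_half_norm_sub_sq (a c y : H) :
    HasFDerivAt (fun u => ⟪a, u⟫ + 1 / 2 * ‖u - c‖ ^ 2) (innerSL ℝ (a + (y - c))) y := by
  have hsq := ((hasFDerivAt_id y).sub_const c).norm_sq.const_mul (1 / 2 : ℝ)
  refine ((innerSL ℝ a).hasFDerivAt.add hsq).congr_fderiv ?_
  ext v
  simp only [innerSL_apply_apply, add_apply, smul_apply, ContinuousLinearMap.comp_apply, id_eq,
    ContinuousLinearMap.id_apply, inner_add_left, smul_eq_mul]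
  ring

theorem inner_add_sub_sub_nonneg_of_isMinOn {K : Set H} (hK : Convex ℝ K) {a c y : H}
    (hyK : y ∈ K) (hmin : IsMinOn (fun u => ⟪a, u⟫ + 1 / 2 * ‖u - c‖ ^ 2) K y) {u : H}
    (hu : u ∈ K) : 0 ≤ ⟪a + (y - c), u - y⟫ :=
  hmin.hasFDerivWithinAt_sub_nonneg hK hyK
    (hasFDerivAt_inner_add_half_norm_sub_sq a c y).hasFDerivWithinAt hu

end Proximal

theorem ofw_ftrl_cross_optimality_general
    {H : Type*} [NormedAddCommGroup H] [InnerProductSpace ℝ H]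
    (K : Set H) (hKcv : Convex ℝ K)
    (η : ℝ) (G g x₁ xt : H)
    (vt : H) (hvtK : vt ∈ K)
    (hvt : ∀ u ∈ K, ⟪η • (G + g) + (xt - x₁), vt⟫ ≤ ⟪η • (G + g) + (xt - x₁), u⟫)
    (yt1 : H) (hyt1K : yt1 ∈ K)
    (hyt1 : ∀ y ∈ K, η * ⟪G + g, yt1⟫ + (1/2) * ‖yt1 - x₁‖^2
              ≤ η * ⟪G + g, y⟫ + (1/2) * ‖y - x₁‖^2) :
    ⟪xt - yt1, vt - yt1⟫ ≤ 0 := by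
  have hftrl : 0 ≤ ⟪η • (G + g) + (yt1 - x₁), vt - yt1⟫ := by
    refine inner_add_sub_sub_nonneg_of_isMinOn hKcv hyt1K (fun y hy => ?_) hvtK
    simpa only [Set.mem_ofPred_eq, real_inner_smul_left] using hyt1 y hy
  have horacle : ⟪η • (G + g) + (xt - x₁), vt - yt1⟫ ≤ 0 := by
    rw [inner_sub_right]
    linarith [hvt yt1 hyt1K]
  calc ⟪xt - yt1, vt - yt1⟫
      = ⟪η • (G + g) + (xt - x₁), vt - yt1⟫ - ⟪η • (G + g) + (yt1 - x₁), vt - yt1⟫ := by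
        rw [← inner_sub_left]
        congr 1
        abel
    _ ≤ 0 := by linarith

theorem ofw_ftrl_cross_optimality
    {H : Type*} [NormedAddCommGroup H] [InnerProductSpace ℝ H] [CompleteSpace H]
    (K : Set H) (hKne : K.Nonempty) (hKcl : IsClosed K) (hKcv : Convex ℝ K)
    (η : ℝ) (hη : 0 < η) (G g x₁ xt : H)
    (vt : H) (hvtK : vt ∈ K)
    (hvt : ∀ u ∈ K, ⟪η • (G + g) + (xt - x₁), vt⟫ ≤ ⟪η • (G + g) + (xt - x₁), u⟫)
    (yt1 : H) (hyt1K : yt1 ∈ K)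
    (hyt1 : ∀ y ∈ K, η * ⟪G + g, yt1⟫ + (1/2) * ‖yt1 - x₁‖^2
              ≤ η * ⟪G + g, y⟫ + (1/2) * ‖y - x₁‖^2) :
    ⟪xt - yt1, vt - yt1⟫ ≤ 0 :=
  ofw_ftrl_cross_optimality_general K hKcv η G g x₁ xt vt hvtK hvt yt1 hyt1K hyt1
end

section
/- Let K be a nonempty closed convex subset of a real Hilbert space with diameter at most D, let g₁,…,g_T ∈ H with ‖g_t‖ ≤ L, let η = D/(L√T), y₁ ∈ K, and define y_{t+1} = argmin_{y∈K} η⟨∑_{s=1}^t g_s, y⟩ + (1/2)‖y − y₁‖² for t = 1,…,T. Then for every y* ∈ K, ∑_{t=1}^T ⟨g_t, y_t − y*⟩ ≤ L·D·√T. -/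
open RealInnerProductSpace Finset

lemma aux_min_strong {H : Type*} [NormedAddCommGroup H] [InnerProductSpace ℝ H]
    {K : Set H} (hKcv : Convex ℝ K) (a b : H) {u z : H} (hu : u ∈ K) (hz : z ∈ K)
    (hmin : ∀ w ∈ K, ⟪a, u⟫ + (1/2) * ‖u - b‖^2 ≤ ⟪a, w⟫ + (1/2) * ‖w - b‖^2) :
    ⟪a, u⟫ + (1/2) * ‖u - b‖^2 + (1/2) * ‖z - u‖^2 ≤ ⟪a, z⟫ + (1/2) * ‖z - b‖^2 := by
  set c : ℝ := ⟪a, z - u⟫ + ⟪u - b, z - u⟫ with hc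
  have hd : (0:ℝ) ≤ ‖z - u‖^2 := sq_nonneg _
  have step : ∀ l : ℝ, 0 < l → l ≤ 1 → 0 ≤ c + l/2 * ‖z - u‖^2 := by
    intro l hl0 hl1
    have hwK : u + l • (z - u) ∈ K := by
      have h := hKcv hu hz (by linarith : (0:ℝ) ≤ 1 - l) hl0.le (by ring)
      have he : (1 - l) • u + l • z = u + l • (z - u) := by module
      rwa [he] at h
    have h := hmin _ hwK
    have e1 : ⟪a, u + l • (z - u)⟫ = ⟪a, u⟫ + l * ⟪a, z - u⟫ := by
      rw [inner_add_right, real_inner_smul_right]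
    have e2 : ‖u + l • (z - u) - b‖^2
        = ‖u - b‖^2 + 2*(l*⟪u - b, z - u⟫) + l^2*‖z-u‖^2 := by
      have he : u + l • (z - u) - b = (u - b) + l • (z - u) := by abel
      rw [he, norm_add_sq_real, real_inner_smul_right, norm_smul]
      rw [Real.norm_eq_abs, abs_of_pos hl0]
      ring
    rw [e1, e2] at h
    have h' : 0 ≤ l * (c + l/2 * ‖z - u‖^2) := by rw [hc]; nlinarith [h]
    exact nonneg_of_mul_nonneg_right h' hl0
  have hc0 : 0 ≤ c := by
    rcases eq_or_lt_of_le hd with h0 | hdpos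
    · have := step 1 one_pos le_rfl
      linarith [this, h0.symm]
    · by_contra hneg
      push_neg at hneg
      set l := min 1 (-c / ‖z - u‖^2) with hl
      have hl0 : 0 < l := lt_min one_pos (div_pos (neg_pos.2 hneg) hdpos)
      have h1 := step l hl0 (min_le_left _ _)
      have h2 : l * ‖z - u‖^2 ≤ -c := by
        calc l * ‖z - u‖^2 ≤ (-c / ‖z - u‖^2) * ‖z - u‖^2 :=
              mul_le_mul_of_nonneg_right (min_le_right _ _) hd
          _ = -c := div_mul_cancel₀ _ hdpos.ne'
      linarith
  have e3 : ⟪a, u⟫ + ⟪a, z - u⟫ = ⟪a, z⟫ := by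
    rw [← inner_add_right]; congr 1; abel
  have e4 : ‖z - b‖^2 = ‖u - b‖^2 + 2*⟪u - b, z - u⟫ + ‖z - u‖^2 := by
    have he : z - b = (u - b) + (z - u) := by abel
    rw [he, norm_add_sq_real]
  rw [hc] at hc0
  linarith

theorem ftrl_regret_bound
    {H : Type*} [NormedAddCommGroup H] [InnerProductSpace ℝ H] [CompleteSpace H]
    (K : Set H) (hKne : K.Nonempty) (hKcl : IsClosed K) (hKcv : Convex ℝ K)
    (D L : ℝ) (hD : 0 < D) (hL : 0 < L)
    (hdiam : ∀ u ∈ K, ∀ v ∈ K, ‖u - v‖ ≤ D)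
    (T : ℕ) (hT : 1 ≤ T)
    (g : ℕ → H) (hg : ∀ t ∈ Finset.Icc 1 T, ‖g t‖ ≤ L)
    (η : ℝ) (hη : η = D / (L * Real.sqrt T))
    (y : ℕ → H) (hy1 : y 1 ∈ K)
    (hyK : ∀ t ∈ Finset.Icc 1 T, y (t+1) ∈ K)
    (hymin : ∀ t ∈ Finset.Icc 1 T, ∀ z ∈ K,
      η * ⟪∑ s ∈ Finset.Icc 1 t, g s, y (t+1)⟫ + (1/2) * ‖y (t+1) - y 1‖^2
        ≤ η * ⟪∑ s ∈ Finset.Icc 1 t, g s, z⟫ + (1/2) * ‖z - y 1‖^2) :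
    ∀ ystar ∈ K, ∑ t ∈ Finset.Icc 1 T, ⟪g t, y t - ystar⟫ ≤ L * D * Real.sqrt T := by
  intro ystar hystar
  have hT0 : (0:ℝ) < T := by
    have : (1:ℝ) ≤ T := by exact_mod_cast hT
    linarith
  have hs0 : 0 < Real.sqrt T := Real.sqrt_pos.2 hT0
  have hη0 : 0 < η := by rw [hη]; positivity
  set G : ℕ → H := fun t => ∑ s ∈ Finset.Icc 1 t, g s with hG
  set F : ℕ → H → ℝ := fun t w => η * ⟪G t, w⟫ + (1/2) * ‖w - y 1‖^2 with hF
  clear_value F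
  have hK' : ∀ t, t ≤ T → y (t+1) ∈ K := by
    intro t ht
    rcases Nat.eq_zero_or_pos t with rfl | htpos
    · simpa using hy1
    · exact hyK t (mem_Icc.2 ⟨htpos, ht⟩)
  have hmin' : ∀ t, t ≤ T → ∀ z ∈ K, F t (y (t+1)) ≤ F t z := by
    intro t ht z hz
    rcases Nat.eq_zero_or_pos t with rfl | htpos
    · simp [hF, hG]
    · simp only [hF, hG]
      exact hymin t (mem_Icc.2 ⟨htpos, ht⟩) z hz
  have hsc : ∀ t, t ≤ T → ∀ z ∈ K, F t (y (t+1)) + (1/2)*‖z - y (t+1)‖^2 ≤ F t z := by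
    intro t ht z hz
    have h1 : ∀ w ∈ K, ⟪η • G t, y (t+1)⟫ + (1/2)*‖y (t+1) - y 1‖^2
        ≤ ⟪η • G t, w⟫ + (1/2)*‖w - y 1‖^2 := by
      intro w hw
      have := hmin' t ht w hw
      simpa [hF, real_inner_smul_left] using this
    have h2 := aux_min_strong hKcv (η • G t) (y 1) (hK' t ht) hz h1
    simp only [real_inner_smul_left] at h2
    simp only [hF]
    linarith
  have claim : ∀ t, t ≤ T →
      ∑ s ∈ Finset.Icc 1 t, (η * ⟪g s, y (s+1)⟫ + (1/2)*‖y (s+1) - y s‖^2)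
        ≤ F t (y (t+1)) := by
    intro t
    induction t with
    | zero => intro _; simp [hF, hG]
    | succ t ih =>
      intro ht
      have ht' : t ≤ T := Nat.le_of_succ_le ht
      rw [Finset.sum_Icc_succ_top (Nat.le_add_left 1 t)]
      have h1 := ih ht'
      have h2 := hsc t ht' (y (t+1+1)) (hK' (t+1) ht)
      have hFexp : F (t+1) (y (t+1+1)) = F t (y (t+1+1)) + η * ⟪g (t+1), y (t+1+1)⟫ := by
        simp only [hF, hG]
        rw [Finset.sum_Icc_succ_top (Nat.le_add_left 1 t), inner_add_left]
        ring
      refine le_trans (add_le_add h1 le_rfl) ?_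
      rw [hFexp]
      linarith [h2]
  have key : ∑ s ∈ Finset.Icc 1 T, (η * ⟪g s, y (s+1)⟫ + (1/2)*‖y (s+1) - y s‖^2)
      ≤ F T ystar := (claim T le_rfl).trans (hmin' T le_rfl ystar hystar)
  obtain ⟨A, hA⟩ : ∃ x, x = ∑ s ∈ Finset.Icc 1 T, ⟪g s, y (s+1)⟫ := ⟨_, rfl⟩
  obtain ⟨C, hC⟩ : ∃ x, x = ∑ s ∈ Finset.Icc 1 T, ⟪g s, ystar⟫ := ⟨_, rfl⟩
  obtain ⟨S, hS⟩ : ∃ x, x = ∑ s ∈ Finset.Icc 1 T, ‖y (s+1) - y s‖^2 := ⟨_, rfl⟩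
  obtain ⟨B, hB⟩ : ∃ x, x = ∑ s ∈ Finset.Icc 1 T, ⟪g s, y s - y (s+1)⟫ := ⟨_, rfl⟩
  have hinner : ⟪G T, ystar⟫ = C := by
    rw [hC]; simp only [hG]; exact sum_inner _ _ _
  have key2 : η * A + (1/2)*S ≤ η * C + (1/2)*‖ystar - y 1‖^2 := by
    have h := key
    rw [Finset.sum_add_distrib, ← Finset.mul_sum, ← Finset.mul_sum, ← hA, ← hS] at h
    simp only [hF] at h
    rw [hinner] at h
    linarith
  have hterm : ∀ s ∈ Finset.Icc 1 T,
      2*η*⟪g s, y s - y (s+1)⟫ ≤ η^2*L^2 + ‖y (s+1) - y s‖^2 := by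
    intro s hsm
    have h1 : ⟪g s, y s - y (s+1)⟫ ≤ ‖g s‖ * ‖y s - y (s+1)‖ := real_inner_le_norm _ _
    have h2 : ‖g s‖ ≤ L := hg s hsm
    have h3 : ‖y s - y (s+1)‖ = ‖y (s+1) - y s‖ := norm_sub_rev _ _
    have h4 : (0:ℝ) ≤ ‖y (s+1) - y s‖ := norm_nonneg _
    have h5 : (0:ℝ) ≤ ‖g s‖ := norm_nonneg _
    rw [h3] at h1
    have h6 : ⟪g s, y s - y (s+1)⟫ ≤ L * ‖y (s+1) - y s‖ := by nlinarith
    nlinarith [sq_nonneg (η*L - ‖y (s+1) - y s‖),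
      mul_le_mul_of_nonneg_left h6 (by linarith : (0:ℝ) ≤ 2*η)]
  have hsum : 2*η*B ≤ (T:ℝ)*η^2*L^2 + S := by
    have h := Finset.sum_le_sum hterm
    rw [← Finset.mul_sum, Finset.sum_add_distrib, Finset.sum_const, Nat.card_Icc,
      ← hB, ← hS] at h
    simp only [Nat.add_sub_cancel, nsmul_eq_mul] at h
    linarith
  have hdecomp : ∑ t ∈ Finset.Icc 1 T, ⟪g t, y t - ystar⟫ = B + A - C := by
    rw [hB, hA, hC, ← Finset.sum_add_distrib, ← Finset.sum_sub_distrib]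
    apply Finset.sum_congr rfl
    intro s _
    simp only [inner_sub_right]
    ring
  have hDb : ‖ystar - y 1‖^2 ≤ D^2 :=
    pow_le_pow_left₀ (norm_nonneg _) (hdiam ystar hystar (y 1) hy1) 2
  have harith : (T:ℝ)*η^2*L^2 + D^2 = 2*η*(L*D*Real.sqrt T) := by
    have hs2 : Real.sqrt (T:ℝ) ^ 2 = (T:ℝ) := Real.sq_sqrt hT0.le
    set s := Real.sqrt (T:ℝ) with hsd
    rw [hη, ← hs2]
    field_simp
    ring
  have hfinal : 2*η*(∑ t ∈ Finset.Icc 1 T, ⟪g t, y t - ystar⟫)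
      ≤ 2*η*(L*D*Real.sqrt T) := by
    rw [hdecomp, ← harith]
    linarith only [hsum, key2, hDb]
  exact le_of_mul_le_mul_left hfinal (by positivity)
end

section
/- Let T ≥ 3 be an integer. Under the assumptions that each loss ℓ_t : H → ℝ is convex and differentiable with ‖∇ℓ_t(x)‖ ≤ L on K, and K ⊆ H is a closed convex set of diameter at most D, the iterates x₁,…,x_T of the Online Frank–Wolfe algorithm with parameters η = (D/(2L))(3/T)^{3/4} and σ = min(1, √(3/T)) satisfy, for every x* ∈ K: ∑_{t=1}^T (ℓ_t(x_t) − ℓ_t(x*)) ≤ (2D/(L·3^{3/4}·T^{1/4}))∑_{t=1}^T ‖g_t‖² + (L/(D·3^{3/4}·T^{1/4}))∑_{t=1}^T ‖x_t − v_t‖² + (L·T^{3/4}/(D·3^{3/4}))‖x* − x₁‖², where g_t = ∇ℓ_t(x_t). In particular ∑_{t=1}^T (ℓ_t(x_t) − ℓ_t(x*)) ≤ (4/3^{3/4}) L D T^{3/4}. -/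
open RealInnerProductSpace Finset

lemma ofw_sum_shift (f : ℕ → ℝ) : ∀ n : ℕ, ∑ t ∈ Finset.Icc 1 (n+1), f t = f 1 + ∑ t ∈ Finset.Icc 1 n, f (t+1) := by
  intro n
  induction n with
  | zero => simp
  | succ m ih =>
      rw [Finset.sum_Icc_succ_top (by omega : 1 ≤ m + 2), ih,
        Finset.sum_Icc_succ_top (by omega : 1 ≤ m + 1)]
      ring

lemma ofw_grad_ineq {H : Type*} [NormedAddCommGroup H] [InnerProductSpace ℝ H] [CompleteSpace H]
    {K : Set H} {f : H → ℝ} {f' a b : H} (hf : ConvexOn ℝ K f)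
    (hd : HasGradientAt f f' a) (ha : a ∈ K) (hb : b ∈ K) :
    ⟪f', b - a⟫ ≤ f b - f a := by
  have hline : HasDerivAt (fun θ : ℝ => a + θ • (b - a)) (b - a) 0 := by
    simpa using ((hasDerivAt_id (0:ℝ)).smul_const (b - a)).const_add a
  have hcomp : HasDerivAt (fun θ : ℝ => f (a + θ • (b - a))) ⟪f', b - a⟫ 0 := by
    have h1 : HasFDerivAt f (InnerProductSpace.toDual ℝ H f') a := hd.hasFDerivAt
    have h1' : HasFDerivAt f (InnerProductSpace.toDual ℝ H f') ((fun θ : ℝ => a + θ • (b-a)) 0) := by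
      simpa using h1
    exact h1'.comp_hasDerivAt 0 hline
  have htend := hasDerivAt_iff_tendsto_slope.mp hcomp
  have htend' : Filter.Tendsto (slope (fun θ : ℝ => f (a + θ • (b - a))) 0) (nhdsWithin 0 (Set.Ioi 0)) (nhds ⟪f', b - a⟫) :=
    htend.mono_left (nhdsWithin_mono _ (fun x hx => ne_of_gt hx))
  refine le_of_tendsto htend' ?_
  filter_upwards [Ioc_mem_nhdsGT_of_mem (Set.left_mem_Ico.mpr one_pos)] with θ hθ
  obtain ⟨hθ0, hθ1⟩ := hθ
  have hcvx := hf.2 ha hb (by linarith : (0:ℝ) ≤ 1 - θ) hθ0.le (by ring)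
  have hpt : (1 - θ) • a + θ • b = a + θ • (b - a) := by
    rw [smul_sub, sub_smul, one_smul]; abel
  rw [hpt] at hcvx
  simp only [smul_eq_mul] at hcvx
  have : (f (a + θ • (b - a)) - f a) / θ ≤ f b - f a := by
    rw [div_le_iff₀ hθ0]
    calc f (a + θ • (b - a)) - f a ≤ ((1-θ) * f a + θ * f b) - f a := by linarith
      _ = (f b - f a) * θ := by ring
  simpa [slope_def_field] using this

set_option maxHeartbeats 2000000 in
theorem online_frank_wolfe_regret
    {H : Type*} [NormedAddCommGroup H] [InnerProductSpace ℝ H] [CompleteSpace H]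
    (K : Set H) (hKne : K.Nonempty) (hKcl : IsClosed K) (hKcv : Convex ℝ K)
    (D L : ℝ) (hD : 0 < D) (hL : 0 < L)
    (hdiam : ∀ u ∈ K, ∀ w ∈ K, ‖u - w‖ ≤ D)
    (T : ℕ) (hT : 3 ≤ T)
    (ℓ : ℕ → H → ℝ) (ℓ' : ℕ → H → H)
    (hconv : ∀ t ∈ Finset.Icc 1 T, ConvexOn ℝ K (ℓ t))
    (hgrad : ∀ t ∈ Finset.Icc 1 T, ∀ z, HasGradientAt (ℓ t) (ℓ' t z) z)
    (hLip : ∀ t ∈ Finset.Icc 1 T, ∀ z ∈ K, ‖ℓ' t z‖ ≤ L)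
    (η σ : ℝ)
    (hη : η = (D / (2 * L)) * ((3:ℝ) / T) ^ ((3:ℝ)/4))
    (hσ : σ = min 1 (Real.sqrt ((3:ℝ) / T)))
    (x v g : ℕ → H)
    (hg : ∀ t ∈ Finset.Icc 1 T, g t = ℓ' t (x t))
    (hx1 : x 1 ∈ K)
    (hvK : ∀ t ∈ Finset.Icc 1 T, v t ∈ K)
    (hvmin : ∀ t ∈ Finset.Icc 1 T, ∀ u ∈ K,
      ⟪η • (∑ s ∈ Finset.Icc 1 t, g s) + (x t - x 1), v t⟫
        ≤ ⟪η • (∑ s ∈ Finset.Icc 1 t, g s) + (x t - x 1), u⟫)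
    (hxstep : ∀ t ∈ Finset.Icc 1 T, x (t+1) = (1 - σ) • x t + σ • v t) :
    ∀ xstar ∈ K,
      (∑ t ∈ Finset.Icc 1 T, (ℓ t (x t) - ℓ t xstar)
        ≤ (2 * D / (L * (3:ℝ) ^ ((3:ℝ)/4) * (T:ℝ) ^ ((1:ℝ)/4)))
              * ∑ t ∈ Finset.Icc 1 T, ‖g t‖^2
          + (L / (D * (3:ℝ) ^ ((3:ℝ)/4) * (T:ℝ) ^ ((1:ℝ)/4)))
              * ∑ t ∈ Finset.Icc 1 T, ‖x t - v t‖^2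
          + (L * (T:ℝ) ^ ((3:ℝ)/4) / (D * (3:ℝ) ^ ((3:ℝ)/4))) * ‖xstar - x 1‖^2) ∧
      ∑ t ∈ Finset.Icc 1 T, (ℓ t (x t) - ℓ t xstar)
        ≤ (4 / (3:ℝ) ^ ((3:ℝ)/4)) * L * D * (T:ℝ) ^ ((3:ℝ)/4) := by
  intro xstar hxstarK
  obtain ⟨n, rfl⟩ : ∃ n, T = n + 1 := ⟨T - 1, by omega⟩
  set τ : ℝ := ((n+1 : ℕ) : ℝ) with hτdef
  have hτ0 : (0:ℝ) < τ := by positivity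
  have hτ3 : (3:ℝ) ≤ τ := by rw [hτdef]; exact_mod_cast hT
  have hr0 : (0:ℝ) < 3 / τ := by positivity
  have hr1 : (3:ℝ) / τ ≤ 1 := by rw [div_le_one hτ0]; linarith
  have hη0 : 0 < η := by rw [hη]; positivity
  have hηne : η ≠ 0 := ne_of_gt hη0
  have hσ' : σ = Real.sqrt (3 / τ) := by
    rw [hσ, min_eq_right (Real.sqrt_le_one.mpr hr1)]
  have hσ0 : 0 < σ := by rw [hσ']; exact Real.sqrt_pos.mpr hr0
  have hσ1 : σ ≤ 1 := by rw [hσ]; exact min_le_left _ _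
  set c : ℝ := 1 / (2 * η) with hc
  have hc0 : 0 < c := by positivity
  set S : ℕ → H := fun t => ∑ s ∈ Finset.Icc 1 t, g s with hS
  set F : ℕ → H → ℝ := fun t z => ⟪S t, z⟫ + c * ‖z - x 1‖^2 with hF
  set Gr : ℕ → H → H := fun t w => S t + (1/η) • (w - x 1) with hGr
  -- quadratic expansion
  have hquad : ∀ (t:ℕ) (w z : H), F t z = F t w + ⟪Gr t w, z - w⟫ + c * ‖z - w‖^2 := by
    intro t w z
    have hn : ‖z - x 1‖^2 = ‖w - x 1‖^2 + 2*⟪w - x 1, z - w⟫ + ‖z - w‖^2 := by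
      have h := norm_add_sq_real (w - x 1) (z - w)
      rw [show w - x 1 + (z - w) = z - x 1 from by abel] at h
      exact h
    have hi : ⟪S t, z - w⟫ = ⟪S t, z⟫ - ⟪S t, w⟫ := inner_sub_right _ _ _
    have hg2 : ⟪Gr t w, z - w⟫ = ⟪S t, z - w⟫ + (1/η) * ⟪w - x 1, z - w⟫ := by
      simp only [hGr]
      rw [inner_add_left, real_inner_smul_left]
    simp only [hF]
    rw [hn, hg2, hi, hc]
    field_simp
    ring
  -- projections
  have hproj : ∀ t : ℕ, ∃ u, u ∈ K ∧ ∀ w ∈ K, ⟪(x 1 - η • S t) - u, w - u⟫ ≤ 0 := by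
    intro t
    obtain ⟨w, hwK, hmin⟩ := exists_norm_eq_iInf_of_complete_convex hKne hKcl.isComplete hKcv
      (x 1 - η • S t)
    exact ⟨w, hwK, fun z hz => (norm_eq_iInf_iff_real_inner_le_zero hKcv hwK).mp hmin z hz⟩
  choose u huK hup using hproj
  have hstrong : ∀ t : ℕ, ∀ w ∈ K, F t (u t) + c * ‖w - u t‖^2 ≤ F t w := by
    intro t w hw
    have h1 := hquad t (u t) w
    have h2 : 0 ≤ ⟪Gr t (u t), w - u t⟫ := by
      have h3 := hup t w hw
      have h4 : Gr t (u t) = (1/η) • (u t - (x 1 - η • S t)) := by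
        simp only [hGr]
        rw [show u t - (x 1 - η • S t) = (u t - x 1) + η • S t from by abel,
          smul_add, smul_smul, one_div, inv_mul_cancel₀ hηne, one_smul]
        abel
      rw [h4, real_inner_smul_left]
      have h5 : ⟪u t - (x 1 - η • S t), w - u t⟫
          = -⟪(x 1 - η • S t) - u t, w - u t⟫ := by
        rw [← inner_neg_left]
        congr 1
        abel
      rw [h5]
      have h7 : 0 ≤ (1:ℝ)/η := by positivity
      exact mul_nonneg h7 (by linarith)
    linarith [h1]
  -- iterates stay in K
  have hxK : ∀ t : ℕ, 1 ≤ t → t ≤ n + 2 → x t ∈ K := by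
    intro t h1
    induction t, h1 using Nat.le_induction with
    | base => intro _; exact hx1
    | succ m hm ih =>
        intro h2
        have hmI : m ∈ Finset.Icc 1 (n+1) := Finset.mem_Icc.mpr ⟨hm, by omega⟩
        rw [hxstep m hmI]
        exact hKcv (ih (by omega)) (hvK m hmI) (by linarith) hσ0.le (by ring)
  have hFsucc : ∀ (t:ℕ) (z : H), F (t+1) z = F t z + ⟪g (t+1), z⟫ := by
    intro t z
    simp only [hF, hS]
    rw [Finset.sum_Icc_succ_top (by omega : 1 ≤ t + 1), inner_add_left]
    ring
  -- Frank-Wolfe step inequality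
  have hIV : ∀ t ∈ Finset.Icc 1 (n+1),
      F t (x (t+1)) ≤ F t (x t) + σ*(F t (u t) - F t (x t) - c*‖x t - u t‖^2)
        + c*σ^2*‖x t - v t‖^2 := by
    intro t ht
    obtain ⟨ht1, ht2⟩ := Finset.mem_Icc.mp ht
    have hstep' : x (t+1) = x t + σ • (v t - x t) := by
      rw [hxstep t ht, smul_sub, sub_smul, one_smul]; abel
    have e1 : F t (x (t+1)) = F t (x t) + σ * ⟪Gr t (x t), v t - x t⟫
        + c * (σ^2 * ‖x t - v t‖^2) := by
      rw [hstep', hquad t (x t) (x t + σ • (v t - x t)), add_sub_cancel_left,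
        real_inner_smul_right, norm_smul, Real.norm_eq_abs, abs_of_nonneg hσ0.le, mul_pow,
        norm_sub_rev (v t) (x t)]
    have e2 : ⟪Gr t (x t), v t - x t⟫ ≤ F t (u t) - F t (x t) - c*‖x t - u t‖^2 := by
      have hq := hquad t (x t) (u t)
      rw [norm_sub_rev (u t) (x t)] at hq
      have hv : ⟪Gr t (x t), v t⟫ ≤ ⟪Gr t (x t), u t⟫ := by
        have h6 := hvmin t ht (u t) (huK t)
        have h7 : η • (∑ s ∈ Finset.Icc 1 t, g s) + (x t - x 1) = η • Gr t (x t) := by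
          simp only [hGr, hS]
          rw [smul_add, smul_smul]
          rw [show η * (1/η) = 1 from by field_simp, one_smul]
        rw [h7, real_inner_smul_left, real_inner_smul_left] at h6
        exact le_of_mul_le_mul_left h6 hη0
      have h8 : ⟪Gr t (x t), v t - x t⟫ = ⟪Gr t (x t), v t⟫ - ⟪Gr t (x t), x t⟫ :=
        inner_sub_right _ _ _
      have h9 : ⟪Gr t (x t), u t - x t⟫ = ⟪Gr t (x t), u t⟫ - ⟪Gr t (x t), x t⟫ :=
        inner_sub_right _ _ _
      linarith
    have e3 : σ * ⟪Gr t (x t), v t - x t⟫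
        ≤ σ * (F t (u t) - F t (x t) - c*‖x t - u t‖^2) :=
      mul_le_mul_of_nonneg_left e2 hσ0.le
    linarith
  set hh : ℕ → ℝ := fun t => F t (x t) - F t (u t) with hhh
  set dd : ℕ → ℝ := fun t => ‖x t - u t‖^2 with hdd
  set ss : ℕ → ℝ := fun t => ⟪g t, x t - u t⟫ with hss
  set ww : ℕ → ℝ := fun t => ‖x t - v t‖^2 with hww
  have P1 : ∀ t ∈ Finset.Icc 1 (n+1), c * dd t ≤ hh t := by
    intro t ht
    obtain ⟨ht1, ht2⟩ := Finset.mem_Icc.mp ht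
    have h := hstrong t (x t) (hxK t ht1 (by omega))
    simp only [hhh, hdd]
    linarith
  have P3 : ∀ t ∈ Finset.Icc 1 (n+1),
      hh (t+1) + σ*c*dd t ≤ (1-σ)*hh t + c*σ^2*ww t + ss (t+1) := by
    intro t ht
    have h1 := hIV t ht
    have h2 := hstrong t (u (t+1)) (huK (t+1))
    have h3 : F (t+1) (x (t+1)) = F t (x (t+1)) + ⟪g (t+1), x (t+1)⟫ := hFsucc t _
    have h4 : F (t+1) (u (t+1)) = F t (u (t+1)) + ⟪g (t+1), u (t+1)⟫ := hFsucc t _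
    have h5 : ⟪g (t+1), x (t+1) - u (t+1)⟫
        = ⟪g (t+1), x (t+1)⟫ - ⟪g (t+1), u (t+1)⟫ := inner_sub_right _ _ _
    have h6 : (0:ℝ) ≤ c * ‖u (t+1) - u t‖^2 := by positivity
    simp only [hhh, hdd, hss, hww]
    linarith
  have P4 : σ*c*dd (n+1) ≤ (1-σ)*hh (n+1) + c*σ^2*ww (n+1) := by
    have hmem : n+1 ∈ Finset.Icc 1 (n+1) := Finset.mem_Icc.mpr ⟨by omega, le_refl _⟩
    have h1 := hIV (n+1) hmem
    have h2 := hstrong (n+1) (x (n+1+1)) (hxK (n+1+1) (by omega) (by omega))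
    have h6 : (0:ℝ) ≤ c * ‖x (n+1+1) - u (n+1)‖^2 := by positivity
    simp only [hhh, hdd, hww]
    linarith
  have P5 : hh 1 ≤ ss 1 := by
    have hS1 : S 1 = g 1 := by simp [hS]
    have h5 : ⟪g 1, x 1 - u 1⟫ = ⟪g 1, x 1⟫ - ⟪g 1, u 1⟫ := inner_sub_right _ _ _
    have h6 : (0:ℝ) ≤ c * ‖u 1 - x 1‖^2 := by positivity
    simp only [hhh, hss, hF, hS1, sub_self, norm_zero]
    rw [h5]
    norm_num
    linarith
  have P6 : ∀ t ∈ Finset.Icc 1 (n+1), ss t ≤ (η/σ)*‖g t‖^2 + (σ*c/2)*dd t := by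
    intro t ht
    have hCS : ss t ≤ ‖g t‖ * ‖x t - u t‖ := by
      simp only [hss]
      exact real_inner_le_norm _ _
    have hσne : σ ≠ 0 := ne_of_gt hσ0
    have hexp : (η/σ)*‖g t‖^2 + (σ*c/2)*‖x t - u t‖^2 - ‖g t‖*‖x t - u t‖
        = (2*η*‖g t‖ - σ*‖x t - u t‖)^2 / (4*η*σ) := by
      rw [hc]
      field_simp
      ring
    have hpos : 0 ≤ (2*η*‖g t‖ - σ*‖x t - u t‖)^2 / (4*η*σ) := by positivity
    simp only [hdd]
    linarith
  set G : ℝ := ∑ t ∈ Finset.Icc 1 (n+1), ‖g t‖^2 with hG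
  set W : ℝ := ∑ t ∈ Finset.Icc 1 (n+1), ww t with hW
  set Ss : ℝ := ∑ t ∈ Finset.Icc 1 (n+1), ss t with hSs
  set A : ℝ := ∑ t ∈ Finset.Icc 1 n, hh t with hA
  set Dd : ℝ := ∑ t ∈ Finset.Icc 1 n, dd t with hDd
  set Ww : ℝ := ∑ t ∈ Finset.Icc 1 n, ww t with hWw
  -- key summed inequality (II)
  have hII : σ*A + hh (n+1) + σ*c*Dd ≤ c*σ^2*Ww + Ss := by
    have hsum : ∑ t ∈ Finset.Icc 1 n, (hh (t+1) + σ*c*dd t)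
        ≤ ∑ t ∈ Finset.Icc 1 n, ((1-σ)*hh t + c*σ^2*ww t + ss (t+1)) := by
      apply Finset.sum_le_sum
      intro t ht'
      obtain ⟨ht1, ht2⟩ := Finset.mem_Icc.mp ht'
      exact P3 t (Finset.mem_Icc.mpr ⟨ht1, by omega⟩)
    have lhs_eq : ∑ t ∈ Finset.Icc 1 n, (hh (t+1) + σ*c*dd t)
        = (∑ t ∈ Finset.Icc 1 n, hh (t+1)) + σ*c*Dd := by
      rw [Finset.sum_add_distrib, hDd, Finset.mul_sum]
    have rhs_eq : ∑ t ∈ Finset.Icc 1 n, ((1-σ)*hh t + c*σ^2*ww t + ss (t+1))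
        = (1-σ)*A + c*σ^2*Ww + ∑ t ∈ Finset.Icc 1 n, ss (t+1) := by
      rw [Finset.sum_add_distrib, Finset.sum_add_distrib, hA, hWw, Finset.mul_sum,
        Finset.mul_sum]
    have e1 : ∑ t ∈ Finset.Icc 1 (n+1), hh t = hh 1 + ∑ t ∈ Finset.Icc 1 n, hh (t+1) :=
      ofw_sum_shift hh n
    have e2 : Ss = ss 1 + ∑ t ∈ Finset.Icc 1 n, ss (t+1) := by
      rw [hSs]; exact ofw_sum_shift ss n
    have e3 : ∑ t ∈ Finset.Icc 1 (n+1), hh t = A + hh (n+1) := by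
      rw [hA]; exact Finset.sum_Icc_succ_top (by omega) hh
    rw [lhs_eq, rhs_eq] at hsum
    linarith [P5]
  have hDA : σ*c*Dd ≤ σ*A := by
    have h1 : ∑ t ∈ Finset.Icc 1 n, (c * dd t) ≤ A := by
      rw [hA]
      apply Finset.sum_le_sum
      intro t ht'
      obtain ⟨ht1, ht2⟩ := Finset.mem_Icc.mp ht'
      exact P1 t (Finset.mem_Icc.mpr ⟨ht1, by omega⟩)
    have h2 : σ*c*Dd = σ * ∑ t ∈ Finset.Icc 1 n, (c * dd t) := by
      rw [hDd, Finset.mul_sum, Finset.mul_sum]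
      apply Finset.sum_congr rfl
      intro t _
      ring
    rw [h2]
    exact mul_le_mul_of_nonneg_left h1 hσ0.le
  have hP1T : σ*c*dd (n+1) ≤ σ*hh (n+1) := by
    have h1 := P1 (n+1) (Finset.mem_Icc.mpr ⟨by omega, le_refl _⟩)
    have h2 := mul_le_mul_of_nonneg_left h1 hσ0.le
    linarith
  have hSsum : Ss ≤ (η/σ)*G + (σ*c/2)*(Dd + dd (n+1)) := by
    have h1 : Ss ≤ ∑ t ∈ Finset.Icc 1 (n+1), ((η/σ)*‖g t‖^2 + (σ*c/2)*dd t) := by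
      rw [hSs]
      exact Finset.sum_le_sum P6
    have h2 : ∑ t ∈ Finset.Icc 1 (n+1), ((η/σ)*‖g t‖^2 + (σ*c/2)*dd t)
        = (η/σ)*G + (σ*c/2)*(∑ t ∈ Finset.Icc 1 (n+1), dd t) := by
      rw [Finset.sum_add_distrib, hG, Finset.mul_sum, Finset.mul_sum]
    have h3 : ∑ t ∈ Finset.Icc 1 (n+1), dd t = Dd + dd (n+1) := by
      rw [hDd]; exact Finset.sum_Icc_succ_top (by omega) dd
    rw [h2, h3] at h1
    exact h1
  have hWsplit : W = Ww + ww (n+1) := by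
    rw [hW, hWw]
    exact Finset.sum_Icc_succ_top (by omega) ww
  have hfinalSs : Ss ≤ (4*η/(3*σ))*G + (c*σ^2/3)*W := by
    have hWsplit' : c*σ^2*W = c*σ^2*Ww + c*σ^2*ww (n+1) := by rw [hWsplit]; ring
    have h43 : (4*η/(3*σ))*G = (4/3)*((η/σ)*G) := by ring
    rw [h43]
    linarith [hII, hDA, hP1T, hSsum, hWsplit', P4]
  -- be the leader
  have hBTL : ∑ t ∈ Finset.Icc 1 (n+1), ⟪g t, u t⟫
      ≤ ∑ t ∈ Finset.Icc 1 (n+1), ⟪g t, xstar⟫ + c*‖xstar - x 1‖^2 := by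
    have key : ∀ m : ℕ, ∑ t ∈ Finset.Icc 1 m, ⟪g t, u t⟫ ≤ F m (u m) := by
      intro m
      induction m with
      | zero =>
          have h0 : F 0 (u 0) = c * ‖u 0 - x 1‖^2 := by
            simp [hF, hS]
          rw [show Finset.Icc 1 0 = ∅ from rfl]
          rw [Finset.sum_empty, h0]
          positivity
      | succ m ih =>
          rw [Finset.sum_Icc_succ_top (by omega : 1 ≤ m+1), hFsucc m (u (m+1))]
          have h2 := hstrong m (u (m+1)) (huK (m+1))
          have h6 : (0:ℝ) ≤ c * ‖u (m+1) - u m‖^2 := by positivity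
          linarith
    have h1 := key (n+1)
    have h2 := hstrong (n+1) xstar hxstarK
    have h3 : F (n+1) xstar = (∑ t ∈ Finset.Icc 1 (n+1), ⟪g t, xstar⟫)
        + c*‖xstar - x 1‖^2 := by
      simp only [hF, hS]
      rw [sum_inner]
    have h6 : (0:ℝ) ≤ c * ‖xstar - u (n+1)‖^2 := by positivity
    linarith
  -- regret bound in terms of η, σ, c
  have hmain : ∑ t ∈ Finset.Icc 1 (n+1), (ℓ t (x t) - ℓ t xstar)
      ≤ (4*η/(3*σ))*G + (c*σ^2/3)*W + c*‖xstar - x 1‖^2 := by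
    have hper : ∀ t ∈ Finset.Icc 1 (n+1),
        ℓ t (x t) - ℓ t xstar ≤ ss t + (⟪g t, u t⟫ - ⟪g t, xstar⟫) := by
      intro t ht
      obtain ⟨ht1, ht2⟩ := Finset.mem_Icc.mp ht
      have hxtK := hxK t ht1 (by omega)
      have hgi := ofw_grad_ineq (hconv t ht) (hgrad t ht (x t)) hxtK hxstarK
      rw [← hg t ht] at hgi
      have e1 : ⟪g t, xstar - x t⟫ = ⟪g t, xstar⟫ - ⟪g t, x t⟫ := inner_sub_right _ _ _
      have e2 : ss t = ⟪g t, x t⟫ - ⟪g t, u t⟫ := by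
        simp only [hss]
        exact inner_sub_right _ _ _
      linarith
    have hsum := Finset.sum_le_sum hper
    rw [Finset.sum_add_distrib, Finset.sum_sub_distrib] at hsum
    have hSseq : ∑ t ∈ Finset.Icc 1 (n+1), ss t = Ss := by rw [hSs]
    have hL1 : ∑ t ∈ Finset.Icc 1 (n+1), (ℓ t (x t) - ℓ t xstar)
        = ∑ t ∈ Finset.Icc 1 (n+1), ℓ t (x t) - ∑ t ∈ Finset.Icc 1 (n+1), ℓ t xstar :=
      Finset.sum_sub_distrib _ _
    have hL2 : ∑ t ∈ Finset.Icc 1 (n+1), (⟪g t, u t⟫ - ⟪g t, xstar⟫)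
        = ∑ t ∈ Finset.Icc 1 (n+1), ⟪g t, u t⟫ - ∑ t ∈ Finset.Icc 1 (n+1), ⟪g t, xstar⟫ :=
      Finset.sum_sub_distrib _ _
    linarith [hfinalSs, hBTL]
  -- numerics
  set a : ℝ := τ ^ ((1:ℝ)/4) with ha
  set b : ℝ := (3:ℝ) ^ ((1:ℝ)/4) with hb
  have ha0 : 0 < a := Real.rpow_pos_of_pos hτ0 _
  have hb0 : 0 < b := Real.rpow_pos_of_pos (by norm_num) _
  have hτ4 : τ = a^4 := by
    rw [ha, ← Real.rpow_natCast (τ ^ ((1:ℝ)/4)) 4, ← Real.rpow_mul hτ0.le]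
    norm_num
  have h34 : τ ^ ((3:ℝ)/4) = a^3 := by
    rw [ha, ← Real.rpow_natCast (τ ^ ((1:ℝ)/4)) 3, ← Real.rpow_mul hτ0.le]
    norm_num
  have hb4 : (3:ℝ) = b^4 := by
    rw [hb, ← Real.rpow_natCast ((3:ℝ) ^ ((1:ℝ)/4)) 4, ← Real.rpow_mul (by norm_num : (0:ℝ) ≤ 3)]
    norm_num
  have hb3 : (3:ℝ) ^ ((3:ℝ)/4) = b^3 := by
    rw [hb, ← Real.rpow_natCast ((3:ℝ) ^ ((1:ℝ)/4)) 3, ← Real.rpow_mul (by norm_num : (0:ℝ) ≤ 3)]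
    norm_num
  have hτ2 : τ ^ ((1:ℝ)/2) = a^2 := by
    rw [ha, ← Real.rpow_natCast (τ ^ ((1:ℝ)/4)) 2, ← Real.rpow_mul hτ0.le]
    norm_num
  have hb2 : (3:ℝ) ^ ((1:ℝ)/2) = b^2 := by
    rw [hb, ← Real.rpow_natCast ((3:ℝ) ^ ((1:ℝ)/4)) 2, ← Real.rpow_mul (by norm_num : (0:ℝ) ≤ 3)]
    norm_num
  have hσab : σ = b^2/a^2 := by
    rw [hσ', Real.sqrt_eq_rpow, Real.div_rpow (by norm_num : (0:ℝ) ≤ 3) hτ0.le,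
      show ((1:ℝ)/2) = (1:ℝ)/2 from rfl, ← hτ2, ← hb2]
  have hηab : η = (D/(2*L)) * (b^3/a^3) := by
    rw [hη, Real.div_rpow (by norm_num : (0:ℝ) ≤ 3) hτ0.le, hb3, h34]
  have hLne : L ≠ 0 := ne_of_gt hL
  have hDne : D ≠ 0 := ne_of_gt hD
  have hane : a ≠ 0 := ne_of_gt ha0
  have hbne : b ≠ 0 := ne_of_gt hb0
  have hE1 : 4*η/(3*σ) = 2 * D / (L * b^3 * a) := by
    rw [hηab, hσab, hb4]
    field_simp
    ring
  have hE2 : c*σ^2/3 = L / (D * b^3 * a) := by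
    rw [hc, hηab, hσab, hb4]
    field_simp
  have hE3 : c = L * a^3 / (D * b^3) := by
    rw [hc, hηab]
    field_simp
  have hfirst : ∑ t ∈ Finset.Icc 1 (n+1), (ℓ t (x t) - ℓ t xstar)
        ≤ (2 * D / (L * b^3 * a)) * G
          + (L / (D * b^3 * a)) * W
          + (L * a^3 / (D * b^3)) * ‖xstar - x 1‖^2 := by
    rw [← hE1, ← hE2, ← hE3]
    exact hmain
  -- crude bounds on the sums
  have hG2 : G ≤ L^2 * τ := by
    have hper : ∀ t ∈ Finset.Icc 1 (n+1), ‖g t‖^2 ≤ L^2 := by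
      intro t ht
      obtain ⟨ht1, ht2⟩ := Finset.mem_Icc.mp ht
      have hlip := hLip t ht (x t) (hxK t ht1 (by omega))
      rw [← hg t ht] at hlip
      exact pow_le_pow_left₀ (norm_nonneg _) hlip 2
    have h := Finset.sum_le_card_nsmul (Finset.Icc 1 (n+1)) _ (L^2) hper
    rw [Nat.card_Icc] at h
    simp only [nsmul_eq_mul] at h
    rw [hG]
    calc ∑ t ∈ Finset.Icc 1 (n+1), ‖g t‖^2 ≤ ((n + 1 + 1 - 1 : ℕ):ℝ) * L^2 := h
      _ = L^2 * τ := by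
          rw [hτdef]
          push_cast
          ring
  have hW2 : W ≤ D^2 * τ := by
    have hper : ∀ t ∈ Finset.Icc 1 (n+1), ww t ≤ D^2 := by
      intro t ht
      obtain ⟨ht1, ht2⟩ := Finset.mem_Icc.mp ht
      have h := hdiam (x t) (hxK t ht1 (by omega)) (v t) (hvK t ht)
      simp only [hww]
      exact pow_le_pow_left₀ (norm_nonneg _) h 2
    have h := Finset.sum_le_card_nsmul (Finset.Icc 1 (n+1)) _ (D^2) hper
    rw [Nat.card_Icc] at h
    simp only [nsmul_eq_mul] at h
    rw [hW]
    calc ∑ t ∈ Finset.Icc 1 (n+1), ww t ≤ ((n + 1 + 1 - 1 : ℕ):ℝ) * D^2 := h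
      _ = D^2 * τ := by
          rw [hτdef]
          push_cast
          ring
  have hN : ‖xstar - x 1‖^2 ≤ D^2 := by
    have h := hdiam xstar hxstarK (x 1) hx1
    exact pow_le_pow_left₀ (norm_nonneg _) h 2
  have hsecond : ∑ t ∈ Finset.Icc 1 (n+1), (ℓ t (x t) - ℓ t xstar)
      ≤ (4 / b^3) * L * D * a^3 := by
    have hstep2 : (2 * D / (L * b^3 * a)) * G + (L / (D * b^3 * a)) * W
        + (L * a^3 / (D * b^3)) * ‖xstar - x 1‖^2
        ≤ (2 * D / (L * b^3 * a)) * (L^2 * τ) + (L / (D * b^3 * a)) * (D^2 * τ)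
          + (L * a^3 / (D * b^3)) * D^2 := by
      gcongr <;> positivity
    have heq : (2 * D / (L * b^3 * a)) * (L^2 * τ) + (L / (D * b^3 * a)) * (D^2 * τ)
          + (L * a^3 / (D * b^3)) * D^2 = (4 / b^3) * L * D * a^3 := by
      rw [hτ4]
      field_simp
      ring
    linarith [hfirst]
  constructor
  · rw [h34, hb3]
    -- goal should now be expressed via a, b
    calc ∑ t ∈ Finset.Icc 1 (n+1), (ℓ t (x t) - ℓ t xstar)
        ≤ (2 * D / (L * b^3 * a)) * G + (L / (D * b^3 * a)) * W
          + (L * a^3 / (D * b^3)) * ‖xstar - x 1‖^2 := hfirst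
      _ = (2 * D / (L * b^3 * a)) * ∑ t ∈ Finset.Icc 1 (n+1), ‖g t‖^2
          + (L / (D * b^3 * a)) * ∑ t ∈ Finset.Icc 1 (n+1), ‖x t - v t‖^2
          + (L * a^3 / (D * b^3)) * ‖xstar - x 1‖^2 := by rw [hG, hW]
  · rw [h34, hb3]
    exact hsecond
end

section
/- Let T ≥ 3, let g₁,…,g_T ∈ H with ‖g_t‖ ≤ L, and let K ⊆ H be closed convex with diameter at most D. Run Online Frank–Wolfe (Algorithm: dir_t = η∑_{s≤t}g_s + (x_t − x₁), v_t = argmin_{v∈K}⟨dir_t, v⟩, x_{t+1} = (1−σ)x_t + σv_t) and FTRL (y_{t+1} = argmin_{y∈K} η⟨∑_{s≤t}g_s, y⟩ + (1/2)‖y − x₁‖²) with y₁ = x₁ ∈ K, η = (D/(2L))(3/T)^{3/4}, σ = min(1,√(3/T)). Define φ_t = ∑_{s=1}^t ⟨g_s, x_s − y_{t+1}⟩ + (1/(6η))‖x_{t+1} − y_{t+1}‖² − (1/(2η))‖y_{t+1} − x₁‖². Then for each 1 ≤ t ≤ T: φ_t − φ_{t−1} ≤ (2D/(L·3^{3/4}·T^{1/4}))‖g_t‖²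 + (L/(D·3^{3/4}·T^{1/4}))‖x_t − v_t‖². -/
/-!
The FTRL iterate `y (t+1)` minimises `⟪η G, ·⟫ + ½‖· - x₁‖²` over `K`, where `G` is the
gradient sum. Its first-order optimality condition shows that consecutive iterates move by at
most `η ‖g t‖`, and strong convexity of that objective contributes `-‖y (t+1) - y t‖² / (2η)`
to the potential. The Frank–Wolfe vertex `v t` and `y (t+1)` minimise linear functionals whose
gradients differ by `x t - y (t+1)`, so `⟪x t - y (t+1), v t - y (t+1)⟫ ≤ 0`, and the
Frank–Wolfe step contracts:
`‖x (t+1) - y (t+1)‖² ≤ (1 - 2σ) ‖x t - y (t+1)‖² + σ² ‖x t - v t‖²`.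
What remains is a scalar inequality settled by AM–GM; the choice of `η` and `σ` turns its
constants `4η/(3σ)` and `σ²/(6η)` into the stated ones.
-/

open RealInnerProductSpace Finset

theorem ofw_scalar_bound {η σ γ w p q : ℝ} (hη : 0 < η) (hσ : 0 < σ) (hσ1 : σ ≤ 1)
    (hγ : 0 ≤ γ) (hw : 0 ≤ w) (hq0 : 0 ≤ q) (hq : q ≤ η * γ) (hwpq : w ≤ p + q) :
    γ * w - q ^ 2 / (2 * η) + ((1 - 2 * σ) * w ^ 2 - p ^ 2) / (6 * η)
      ≤ 4 * η / (3 * σ) * γ ^ 2 := by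
  -- If `q ≤ w` then `p ≥ w - q`, and AM–GM `(σ w - 2ηγ)² ≥ 0` finishes;
  -- if `w ≤ q` the left side is at most `γ q - q²/(3η) ≤ 3ηγ²/4`.
  have key : σ * (6 * η * (γ * w) - 3 * q ^ 2 + ((1 - 2 * σ) * w ^ 2 - p ^ 2))
      ≤ 8 * η ^ 2 * γ ^ 2 := by
    rcases le_total q w with hqw | hwq
    · have hp2 : (w - q) ^ 2 ≤ p ^ 2 := by nlinarith
      nlinarith [sq_nonneg (σ * w - 2 * η * γ), mul_nonneg hσ.le (sub_nonneg.2 hp2),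
        mul_nonneg (mul_nonneg hσ.le hw) (sub_nonneg.2 hq), mul_nonneg hσ.le (sq_nonneg q)]
    · nlinarith [mul_nonneg hσ.le (sq_nonneg (2 * q - 3 * η * γ)),
        mul_nonneg (sub_nonneg.2 hσ1) (sq_nonneg (η * γ)), mul_nonneg hσ.le (sq_nonneg p),
        mul_nonneg (mul_nonneg hσ.le (mul_nonneg hη.le hγ)) (sub_nonneg.2 hwq),
        mul_nonneg hσ.le (mul_nonneg (add_nonneg hq0 hw) (sub_nonneg.2 hwq)),
        mul_nonneg (mul_nonneg hσ.le hσ.le) (sq_nonneg w)]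
  calc γ * w - q ^ 2 / (2 * η) + ((1 - 2 * σ) * w ^ 2 - p ^ 2) / (6 * η)
      = σ * (6 * η * (γ * w) - 3 * q ^ 2 + ((1 - 2 * σ) * w ^ 2 - p ^ 2)) / (6 * η * σ) := by
        field_simp; ring
    _ ≤ 8 * η ^ 2 * γ ^ 2 / (6 * η * σ) := by gcongr
    _ = 4 * η / (3 * σ) * γ ^ 2 := by field_simp; ring

theorem ofw_parameters_spec {D L η σ : ℝ} {T : ℕ} (hD : 0 < D) (hL : 0 < L) (hT : 3 ≤ T)
    (hη : η = (D / (2 * L)) * ((3:ℝ) / T) ^ ((3:ℝ)/4))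
    (hσ : σ = min 1 (Real.sqrt ((3:ℝ) / T))) :
    0 < η ∧ 0 < σ ∧ σ ≤ 1
      ∧ 2 * D / (L * (3:ℝ) ^ ((3:ℝ)/4) * (T:ℝ) ^ ((1:ℝ)/4)) = 4 * η / (3 * σ)
      ∧ L / (D * (3:ℝ) ^ ((3:ℝ)/4) * (T:ℝ) ^ ((1:ℝ)/4)) = σ ^ 2 / (6 * η) := by
  have hT0 : (0:ℝ) < T := by positivity
  have h3T : (0:ℝ) < 3 / T := by positivity
  have h3T1 : (3:ℝ) / T ≤ 1 := by rw [div_le_one hT0]; exact_mod_cast hT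
  set ρ : ℝ := ((3:ℝ) / T) ^ ((1:ℝ)/4) with hρ
  have hρ0 : 0 < ρ := by positivity
  have hρ1 : ρ ≤ 1 := Real.rpow_le_one h3T.le h3T1 (by norm_num)
  have hρpow : ∀ n : ℕ, ρ ^ n = ((3:ℝ) / T) ^ ((n:ℝ)/4) := fun n => by
    rw [hρ, ← Real.rpow_natCast, ← Real.rpow_mul h3T.le]; ring_nf
  have hσρ : σ = ρ ^ 2 := by
    rw [hσ, min_eq_right (Real.sqrt_le_one.mpr h3T1), Real.sqrt_eq_rpow, hρpow]; norm_num
  have hηρ : η = D / (2 * L) * ρ ^ 3 := by rw [hη, hρpow]; norm_num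
  have hprod : (3:ℝ) ^ ((3:ℝ)/4) * (T:ℝ) ^ ((1:ℝ)/4) = 3 / ρ := by
    rw [eq_div_iff hρ0.ne', hρ, Real.div_rpow (by norm_num) hT0.le, mul_assoc,
      mul_div_cancel₀ _ (by positivity), ← Real.rpow_add (by norm_num)]
    norm_num
  refine ⟨by rw [hηρ]; positivity, by rw [hσρ]; positivity, by rw [hσρ]; nlinarith,
    ?_, ?_⟩
  · rw [mul_assoc, hprod, hηρ, hσρ]; field_simp; ring
  · rw [mul_assoc, hprod, hηρ, hσρ]; field_simp; ring

section

variable {H : Type*} [NormedAddCommGroup H] [InnerProductSpace ℝ H] {K : Set H}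
  {c c' x₀ y y' z : H}

theorem Convex.inner_add_sub_nonneg_of_isMinOn (hK : Convex ℝ K)
    (hmin : IsMinOn (fun z => ⟪c, z⟫ + 1 / 2 * ‖z - x₀‖ ^ 2) K y)
    (hy : y ∈ K) (hz : z ∈ K) :
    0 ≤ ⟪c + (y - x₀), z - y⟫ := by
  have hderiv : HasFDerivWithinAt (fun z => ⟪c, z⟫ + 1 / 2 * ‖z - x₀‖ ^ 2)
      (innerSL ℝ c + (1 / 2 : ℝ) • 2 • (innerSL ℝ (y - x₀)).comp (.id ℝ H)) K y :=
    (innerSL ℝ c).hasFDerivWithinAt.add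
      (((hasFDerivWithinAt_id y K).sub_const x₀).norm_sq.const_mul (1 / 2))
  simpa [inner_add_left, inner_sub_left] using hmin.localize.hasFDerivWithinAt_nonneg hderiv
    (sub_mem_posTangentConeAt_of_segment_subset (hK.segment_subset hy hz))

theorem Convex.add_half_norm_sub_sq_le_of_isMinOn (hK : Convex ℝ K)
    (hmin : IsMinOn (fun z => ⟪c, z⟫ + 1 / 2 * ‖z - x₀‖ ^ 2) K y)
    (hy : y ∈ K) (hz : z ∈ K) :
    ⟪c, y⟫ + 1 / 2 * ‖y - x₀‖ ^ 2 + 1 / 2 * ‖z - y‖ ^ 2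
      ≤ ⟪c, z⟫ + 1 / 2 * ‖z - x₀‖ ^ 2 := by
  have hvi := hK.inner_add_sub_nonneg_of_isMinOn hmin hy hz
  have hexpand :
      ‖z - x₀‖ ^ 2 = ‖y - x₀‖ ^ 2 + 2 * ⟪y - x₀, z - y⟫ + ‖z - y‖ ^ 2 := by
    rw [← norm_add_sq_real, add_comm (y - x₀), sub_add_sub_cancel]
  rw [inner_add_left, inner_sub_right] at hvi
  linarith

theorem Convex.norm_sub_le_of_isMinOn (hK : Convex ℝ K)
    (hmin : IsMinOn (fun z => ⟪c, z⟫ + 1 / 2 * ‖z - x₀‖ ^ 2) K y)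
    (hmin' : IsMinOn (fun z => ⟪c', z⟫ + 1 / 2 * ‖z - x₀‖ ^ 2) K y')
    (hy : y ∈ K) (hy' : y' ∈ K) :
    ‖y' - y‖ ≤ ‖c' - c‖ := by
  have hvi := hK.inner_add_sub_nonneg_of_isMinOn hmin hy hy'
  have hvi' := hK.inner_add_sub_nonneg_of_isMinOn hmin' hy' hy
  have hsum : ⟪c + (y - x₀), y' - y⟫ + ⟪c' + (y' - x₀), y - y'⟫
      = ⟪c - c', y' - y⟫ - ‖y' - y‖ ^ 2 := by
    rw [← neg_sub y' y, inner_neg_right, ← sub_eq_add_neg, ← inner_sub_left,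
      ← real_inner_self_eq_norm_sq, ← inner_sub_left]
    congr 1; abel
  have hcs := real_inner_le_norm (c - c') (y' - y)
  rw [norm_sub_rev c c'] at hcs
  nlinarith [norm_nonneg (y' - y), norm_nonneg (c' - c)]

theorem norm_sub_convex_combo_sq_le {x v : H} {σ : ℝ} (hσ : 0 ≤ σ)
    (h : ⟪x - y, v - y⟫ ≤ 0) :
    ‖(1 - σ) • x + σ • v - y‖ ^ 2 ≤ (1 - 2 * σ) * ‖x - y‖ ^ 2 + σ ^ 2 * ‖x - v‖ ^ 2 := by
  have hdecomp : (1 - σ) • x + σ • v - y = (x - y) - σ • (x - v) := by module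
  have hinner : ⟪x - y, x - v⟫ = ‖x - y‖ ^ 2 - ⟪x - y, v - y⟫ := by
    rw [← real_inner_self_eq_norm_sq, ← inner_sub_right]; congr 1; abel
  rw [hdecomp, norm_sub_sq_real, real_inner_smul_right, norm_smul, mul_pow, Real.norm_eq_abs,
    sq_abs, hinner]
  nlinarith

theorem sum_inner_sub_Icc_succ (g x : ℕ → H) (t : ℕ) :
    ∑ s ∈ Icc 1 (t + 1), ⟪g s, x s - y'⟫
      = ∑ s ∈ Icc 1 t, ⟪g s, x s - y⟫ + ⟪g (t + 1), x (t + 1) - y'⟫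
        - ⟪∑ s ∈ Icc 1 t, g s, y' - y⟫ := by
  have hsplit : ∀ s, ⟪g s, x s - y'⟫ = ⟪g s, x s - y⟫ - ⟪g s, y' - y⟫ := fun s => by
    rw [← inner_sub_right, sub_sub_sub_cancel_right]
  rw [sum_Icc_succ_top (Nat.le_add_left 1 t), sum_inner]
  simp only [hsplit, sum_sub_distrib]
  ring

theorem ftrl_isMinOn {x₀ : H} {g y : ℕ → H} {η : ℝ} {T t : ℕ}
    (hx₀ : x₀ ∈ K) (hy1 : y 1 = x₀)
    (hyK : ∀ t ∈ Icc 1 T, y (t + 1) ∈ K)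
    (hymin : ∀ t ∈ Icc 1 T, ∀ z ∈ K,
      η * ⟪∑ s ∈ Icc 1 t, g s, y (t + 1)⟫ + 1 / 2 * ‖y (t + 1) - x₀‖ ^ 2
        ≤ η * ⟪∑ s ∈ Icc 1 t, g s, z⟫ + 1 / 2 * ‖z - x₀‖ ^ 2)
    (ht : t ≤ T) :
    y (t + 1) ∈ K
      ∧ IsMinOn (fun z => ⟪η • ∑ s ∈ Icc 1 t, g s, z⟫ + 1 / 2 * ‖z - x₀‖ ^ 2) K
          (y (t + 1)) := by
  rcases Nat.eq_zero_or_pos t with rfl | ht0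
  · refine ⟨hy1 ▸ hx₀, fun z _ => ?_⟩
    simp [hy1]
  · have htIcc : t ∈ Icc 1 T := mem_Icc.mpr ⟨ht0, ht⟩
    refine ⟨hyK t htIcc, isMinOn_iff.mpr fun z hz => ?_⟩
    simpa only [real_inner_smul_left] using hymin t htIcc z hz

-- In the application `X = x t`, `V = v t`, `Y₁ = y t`, `Y₂ = y (t+1)`, `G = ∑_{s<t} g s`, `g = g t`.
theorem ofw_potential_step_le {x₀ X V Y₁ Y₂ G g : H} {η σ : ℝ} (hK : Convex ℝ K)
    (hη : 0 < η) (hσ : 0 < σ) (hσ1 : σ ≤ 1)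
    (hV : V ∈ K) (hY₁ : Y₁ ∈ K) (hY₂ : Y₂ ∈ K)
    (hVmin : IsMinOn (fun u => ⟪η • (G + g) + (X - x₀), u⟫) K V)
    (hY₁min : IsMinOn (fun z => ⟪η • G, z⟫ + 1 / 2 * ‖z - x₀‖ ^ 2) K Y₁)
    (hY₂min : IsMinOn (fun z => ⟪η • (G + g), z⟫ + 1 / 2 * ‖z - x₀‖ ^ 2) K Y₂) :
    ⟪g, X - Y₂⟫ - ⟪G, Y₂ - Y₁⟫
        + 1 / (6 * η) * (‖(1 - σ) • X + σ • V - Y₂‖ ^ 2 - ‖X - Y₁‖ ^ 2)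
        - 1 / (2 * η) * (‖Y₂ - x₀‖ ^ 2 - ‖Y₁ - x₀‖ ^ 2)
      ≤ 4 * η / (3 * σ) * ‖g‖ ^ 2 + σ ^ 2 / (6 * η) * ‖X - V‖ ^ 2 := by
  have hstable : ‖Y₂ - Y₁‖ ≤ η * ‖g‖ := by
    simpa [smul_add, norm_smul, abs_of_pos hη] using
      hK.norm_sub_le_of_isMinOn hY₁min hY₂min hY₁ hY₂
  have hgrowth :
      -⟪G, Y₂ - Y₁⟫ - 1 / (2 * η) * (‖Y₂ - x₀‖ ^ 2 - ‖Y₁ - x₀‖ ^ 2)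
      ≤ -(‖Y₂ - Y₁‖ ^ 2 / (2 * η)) := by
    have h := hK.add_half_norm_sub_sq_le_of_isMinOn hY₁min hY₁ hY₂
    rw [real_inner_smul_left, real_inner_smul_left] at h
    rw [inner_sub_right]
    field_simp
    linarith
  have hangle : ⟪X - Y₂, V - Y₂⟫ ≤ 0 := by
    have hvi := hK.inner_add_sub_nonneg_of_isMinOn hY₂min hY₂ hV
    have hVY₂ : ⟪η • (G + g) + (X - x₀), V⟫ ≤ ⟪η • (G + g) + (X - x₀), Y₂⟫ := hVmin hY₂
    rw [← sub_nonpos, ← inner_sub_right] at hVY₂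
    have hdiff : ⟪X - Y₂, V - Y₂⟫
        = ⟪η • (G + g) + (X - x₀), V - Y₂⟫ - ⟪η • (G + g) + (Y₂ - x₀), V - Y₂⟫ := by
      rw [← inner_sub_left]; congr 1; abel
    linarith
  have hstep := mul_le_mul_of_nonneg_left (norm_sub_convex_combo_sq_le hσ.le hangle)
    (by positivity : 0 ≤ 1 / (6 * η))
  have hcs := real_inner_le_norm g (X - Y₂)
  have htri : ‖X - Y₂‖ ≤ ‖X - Y₁‖ + ‖Y₂ - Y₁‖ := by
    simpa using norm_sub_le (X - Y₁) (Y₂ - Y₁)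
  have hscalar := ofw_scalar_bound hη hσ hσ1 (norm_nonneg g) (norm_nonneg (X - Y₂))
    (norm_nonneg (Y₂ - Y₁)) hstable htri
  have hsplit : ‖g‖ * ‖X - Y₂‖ - ‖Y₂ - Y₁‖ ^ 2 / (2 * η)
      + 1 / (6 * η) * ((1 - 2 * σ) * ‖X - Y₂‖ ^ 2 + σ ^ 2 * ‖X - V‖ ^ 2 - ‖X - Y₁‖ ^ 2)
      = (‖g‖ * ‖X - Y₂‖ - ‖Y₂ - Y₁‖ ^ 2 / (2 * η)
          + ((1 - 2 * σ) * ‖X - Y₂‖ ^ 2 - ‖X - Y₁‖ ^ 2) / (6 * η))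
        + σ ^ 2 / (6 * η) * ‖X - V‖ ^ 2 := by
    ring
  linarith

end

theorem ofw_potential_difference_bound_general
    {H : Type*} [NormedAddCommGroup H] [InnerProductSpace ℝ H]
    (K : Set H) (hKcv : Convex ℝ K)
    (D L : ℝ) (hD : 0 < D) (hL : 0 < L)
    (T : ℕ) (hT : 3 ≤ T)
    (g : ℕ → H)
    (η σ : ℝ)
    (hη : η = (D / (2 * L)) * ((3:ℝ) / T) ^ ((3:ℝ)/4))
    (hσ : σ = min 1 (Real.sqrt ((3:ℝ) / T)))
    (x v y : ℕ → H)
    (hx1 : x 1 ∈ K) (hy1 : y 1 = x 1)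
    (hvK : ∀ t ∈ Finset.Icc 1 T, v t ∈ K)
    (hvmin : ∀ t ∈ Finset.Icc 1 T, ∀ u ∈ K,
      ⟪η • (∑ s ∈ Finset.Icc 1 t, g s) + (x t - x 1), v t⟫
        ≤ ⟪η • (∑ s ∈ Finset.Icc 1 t, g s) + (x t - x 1), u⟫)
    (hxstep : ∀ t ∈ Finset.Icc 1 T, x (t+1) = (1 - σ) • x t + σ • v t)
    (hyK : ∀ t ∈ Finset.Icc 1 T, y (t+1) ∈ K)
    (hymin : ∀ t ∈ Finset.Icc 1 T, ∀ z ∈ K,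
      η * ⟪∑ s ∈ Finset.Icc 1 t, g s, y (t+1)⟫ + (1/2) * ‖y (t+1) - x 1‖^2
        ≤ η * ⟪∑ s ∈ Finset.Icc 1 t, g s, z⟫ + (1/2) * ‖z - x 1‖^2)
    (φ : ℕ → ℝ)
    (hφ : ∀ t ≤ T, φ t = ∑ s ∈ Finset.Icc 1 t, ⟪g s, x s - y (t+1)⟫
            + (1/(6*η)) * ‖x (t+1) - y (t+1)‖^2
            - (1/(2*η)) * ‖y (t+1) - x 1‖^2) :
    ∀ t ∈ Finset.Icc 1 T,
      φ t - φ (t-1)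
        ≤ (2 * D / (L * (3:ℝ) ^ ((3:ℝ)/4) * (T:ℝ) ^ ((1:ℝ)/4))) * ‖g t‖^2
          + (L / (D * (3:ℝ) ^ ((3:ℝ)/4) * (T:ℝ) ^ ((1:ℝ)/4))) * ‖x t - v t‖^2 := by
  obtain ⟨hη0, hσ0, hσ1, hC₁, hC₂⟩ := ofw_parameters_spec hD hL hT hη hσ
  intro t ht
  obtain ⟨s, rfl⟩ : ∃ s, t = s + 1 := ⟨t - 1, by have := (mem_Icc.mp ht).1; omega⟩
  have hsT : s + 1 ≤ T := (mem_Icc.mp ht).2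
  have hsplit : ∑ r ∈ Icc 1 (s + 1), g r = ∑ r ∈ Icc 1 s, g r + g (s + 1) :=
    sum_Icc_succ_top (Nat.le_add_left 1 s) g
  obtain ⟨hY₁, hY₁min⟩ := ftrl_isMinOn hx1 hy1 hyK hymin (Nat.le_of_succ_le hsT)
  obtain ⟨hY₂, hY₂min⟩ := ftrl_isMinOn hx1 hy1 hyK hymin hsT
  have hVmin := hvmin (s + 1) ht
  rw [hsplit] at hY₂min hVmin
  rw [Nat.add_sub_cancel, hφ _ hsT, hφ s (Nat.le_of_succ_le hsT), sum_inner_sub_Icc_succ,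
    hxstep _ ht, hC₁, hC₂]
  refine (ofw_potential_step_le hKcv hη0 hσ0 hσ1 (hvK _ ht) hY₁ hY₂ hVmin hY₁min
    hY₂min).trans_eq' ?_
  ring

theorem ofw_potential_difference_bound
    {H : Type*} [NormedAddCommGroup H] [InnerProductSpace ℝ H] [CompleteSpace H]
    (K : Set H) (hKne : K.Nonempty) (hKcl : IsClosed K) (hKcv : Convex ℝ K)
    (D L : ℝ) (hD : 0 < D) (hL : 0 < L)
    (hdiam : ∀ u ∈ K, ∀ w ∈ K, ‖u - w‖ ≤ D)
    (T : ℕ) (hT : 3 ≤ T)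
    (g : ℕ → H) (hg : ∀ t ∈ Finset.Icc 1 T, ‖g t‖ ≤ L)
    (η σ : ℝ)
    (hη : η = (D / (2 * L)) * ((3:ℝ) / T) ^ ((3:ℝ)/4))
    (hσ : σ = min 1 (Real.sqrt ((3:ℝ) / T)))
    (x v y : ℕ → H)
    (hx1 : x 1 ∈ K) (hy1 : y 1 = x 1)
    (hvK : ∀ t ∈ Finset.Icc 1 T, v t ∈ K)
    (hvmin : ∀ t ∈ Finset.Icc 1 T, ∀ u ∈ K,
      ⟪η • (∑ s ∈ Finset.Icc 1 t, g s) + (x t - x 1), v t⟫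
        ≤ ⟪η • (∑ s ∈ Finset.Icc 1 t, g s) + (x t - x 1), u⟫)
    (hxstep : ∀ t ∈ Finset.Icc 1 T, x (t+1) = (1 - σ) • x t + σ • v t)
    (hyK : ∀ t ∈ Finset.Icc 1 T, y (t+1) ∈ K)
    (hymin : ∀ t ∈ Finset.Icc 1 T, ∀ z ∈ K,
      η * ⟪∑ s ∈ Finset.Icc 1 t, g s, y (t+1)⟫ + (1/2) * ‖y (t+1) - x 1‖^2
        ≤ η * ⟪∑ s ∈ Finset.Icc 1 t, g s, z⟫ + (1/2) * ‖z - x 1‖^2)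
    (φ : ℕ → ℝ)
    (hφ : ∀ t ≤ T, φ t = ∑ s ∈ Finset.Icc 1 t, ⟪g s, x s - y (t+1)⟫
            + (1/(6*η)) * ‖x (t+1) - y (t+1)‖^2
            - (1/(2*η)) * ‖y (t+1) - x 1‖^2) :
    ∀ t ∈ Finset.Icc 1 T,
      φ t - φ (t-1)
        ≤ (2 * D / (L * (3:ℝ) ^ ((3:ℝ)/4) * (T:ℝ) ^ ((1:ℝ)/4))) * ‖g t‖^2
          + (L / (D * (3:ℝ) ^ ((3:ℝ)/4) * (T:ℝ) ^ ((1:ℝ)/4))) * ‖x t - v t‖^2 :=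
  ofw_potential_difference_bound_general K hKcv D L hD hL T hT g η σ hη hσ x v y hx1 hy1 hvK hvmin
    hxstep hyK hymin φ hφ
end
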